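/- Every instance with n agents admits a (1/2)-MMS allocation, i.e., a complete allocation x with u_i(x_i) ≥ (1/2)·MMS_i for every agent i. -/
import Mathlib


open scoped BigOperators Classical

/-- An instance of fair division with subjective divisibility: `n` agents and `m` goods,
each good of total amount 1.  Each agent `i` assigns a nonnegative value `v i g` to each
good `g` and regards each good as either divisible or indivisible for her. -/
structure FairDivision (n m : ℕ) where
  /-- agent `i`'s value for good `g` -/
  v : Fin n → Fin m → ℝ
  v_nonneg : ∀ i g, 0 ≤ v i g
  /-- `divisible i g` means agent `i` regards good `g` as divisible -/
  divisible : Fin n → Fin m → Prop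

namespace FairDivision

variable {n m : ℕ}

/-- Agent `i`'s utility from receiving fraction `t ∈ [0,1]` of good `g`:
`t * v i g` if `g` is divisible for `i`; `v i g` if `g` is indivisible for `i` and `t = 1`;
and `0` if `g` is indivisible for `i` and `t < 1`. -/
noncomputable def frUtil (I : FairDivision n m) (i : Fin n) (g : Fin m) (t : ℝ) : ℝ :=
  if I.divisible i g then t * I.v i g else if t = 1 then I.v i g else 0

/-- Agent `i`'s (additive) utility for a bundle `b`, given by the fraction `b g` of each good. -/
noncomputable def util (I : FairDivision n m) (i : Fin n) (b : Fin m → ℝ) : ℝ :=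
  ∑ g, I.frUtil i g (b g)

/-- Agent `i`'s utility for the bundle `b` with good `g` omitted. -/
noncomputable def utilMinus (I : FairDivision n m) (i : Fin n) (b : Fin m → ℝ) (g : Fin m) : ℝ :=
  ∑ g' ∈ Finset.univ.erase g, I.frUtil i g' (b g')

/-- A complete allocation: fractions in `[0,1]` summing to `1` for every good. -/
def IsAllocation (I : FairDivision n m) (x : Fin n → Fin m → ℝ) : Prop :=
  (∀ i g, 0 ≤ x i g ∧ x i g ≤ 1) ∧ ∀ g, ∑ i, x i g = 1

/-- A partial allocation: fractions in `[0,1]` summing to at most `1` for every good. -/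
def IsPartialAllocation (I : FairDivision n m) (x : Fin n → Fin m → ℝ) : Prop :=
  (∀ i g, 0 ≤ x i g ∧ x i g ≤ 1) ∧ ∀ g, ∑ i, x i g ≤ 1

/-- The maximin share of agent `i`: the supremum, over all fractional `n`-partitions
`P` of the goods, of the minimum over the parts `P j` of agent `i`'s utility. -/
noncomputable def MMS (I : FairDivision n m) (i : Fin n) : ℝ :=
  sSup { r : ℝ | ∃ P : Fin n → Fin m → ℝ, I.IsAllocation P ∧ r = ⨅ j, I.util i (P j) }

/-- Non-wastefulness: every positive fraction an agent receives yields her positive utility. -/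
def NonWasteful (I : FairDivision n m) (x : Fin n → Fin m → ℝ) : Prop :=
  ∀ i g, 0 < x i g → 0 < I.frUtil i g (x i g)

/-- Envy-freeness. -/
def EF (I : FairDivision n m) (x : Fin n → Fin m → ℝ) : Prop :=
  ∀ i j, I.util i (x j) ≤ I.util i (x i)

/-- Envy-freeness for mixed goods: for all agents `i, j`, if every good `j` receives a
positive fraction of is indivisible for `i`, then `i` does not envy `j` after removing some
such good from `j`'s bundle; otherwise `i` does not envy `j`. -/
def EFM (I : FairDivision n m) (x : Fin n → Fin m → ℝ) : Prop :=
  ∀ i j,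
    ((∀ g, 0 < x j g → ¬ I.divisible i g) →
      ∃ g, 0 < x j g ∧ I.utilMinus i (x j) g ≤ I.util i (x i)) ∧
    ((¬ ∀ g, 0 < x j g → ¬ I.divisible i g) → I.util i (x j) ≤ I.util i (x i))

/-- EFXM: as EFM, but the envy must vanish after removing any positively valued such good. -/
def EFXM (I : FairDivision n m) (x : Fin n → Fin m → ℝ) : Prop :=
  ∀ i j,
    ((∀ g, 0 < x j g → ¬ I.divisible i g) →
      ∀ g, 0 < x j g → 0 < I.v i g → I.utilMinus i (x j) g ≤ I.util i (x i)) ∧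
    ((¬ ∀ g, 0 < x j g → ¬ I.divisible i g) → I.util i (x j) ≤ I.util i (x i))

/-- EF1M: if `j`'s bundle contains (a positive fraction of) some good that `i` regards as
indivisible and values positively, the envy of `i` must vanish after removing some such good;
otherwise `i` does not envy `j`. -/
def EF1M (I : FairDivision n m) (x : Fin n → Fin m → ℝ) : Prop :=
  ∀ i j,
    ((∃ g, 0 < x j g ∧ ¬ I.divisible i g ∧ 0 < I.v i g) →
      ∃ g, 0 < x j g ∧ ¬ I.divisible i g ∧ 0 < I.v i g ∧
        I.utilMinus i (x j) g ≤ I.util i (x i)) ∧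
    ((¬ ∃ g, 0 < x j g ∧ ¬ I.divisible i g ∧ 0 < I.v i g) → I.util i (x j) ≤ I.util i (x i))

/-- Pareto optimality (among complete allocations). -/
def ParetoOptimal (I : FairDivision n m) (x : Fin n → Fin m → ℝ) : Prop :=
  ¬ ∃ y, I.IsAllocation y ∧ (∀ i, I.util i (x i) ≤ I.util i (y i)) ∧
    ∃ i, I.util i (x i) < I.util i (y i)

/-- In a 3-agent instance, `B` (a set of whole goods) is a reducible bundle with respect to
agent `i`: `u_i(B) ≥ (2/3)·MMS_i`, `u_j(M∖B) ≥ 2·MMS_j` for some agent `j ≠ i`, and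
`u_k(M∖B) ≥ (4/3)·MMS_k` for the remaining agent `k`. -/
def IsReducible (I : FairDivision 3 m) (B : Finset (Fin m)) (i : Fin 3) : Prop :=
  2 / 3 * I.MMS i ≤ ∑ g ∈ B, I.v i g ∧
    ∃ j, j ≠ i ∧ 2 * I.MMS j ≤ ∑ g ∈ Bᶜ, I.v j g ∧
      ∀ k, k ≠ i → k ≠ j → 4 / 3 * I.MMS k ≤ ∑ g ∈ Bᶜ, I.v k g

end FairDivision
namespace FairDivision

variable {n m : ℕ}

lemma frUtil_zero (I : FairDivision n m) (i : Fin n) (g : Fin m) : I.frUtil i g 0 = 0 := by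
  simp [frUtil]

lemma frUtil_nonneg (I : FairDivision n m) (i : Fin n) (g : Fin m) {t : ℝ} (ht : 0 ≤ t) :
    0 ≤ I.frUtil i g t := by
  unfold frUtil
  split_ifs
  · exact mul_nonneg ht (I.v_nonneg i g)
  · exact I.v_nonneg i g
  · exact le_rfl

lemma frUtil_le_v (I : FairDivision n m) (i : Fin n) (g : Fin m) {t : ℝ} (ht : t ≤ 1) :
    I.frUtil i g t ≤ I.v i g := by
  unfold frUtil
  split_ifs
  · nlinarith [I.v_nonneg i g]
  · exact le_rfl
  · exact I.v_nonneg i g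

lemma frUtil_one (I : FairDivision n m) (i : Fin n) (g : Fin m) :
    I.frUtil i g 1 = I.v i g := by
  unfold frUtil; split_ifs <;> simp_all

lemma util_nonneg (I : FairDivision n m) (i : Fin n) {b : Fin m → ℝ} (hb : ∀ g, 0 ≤ b g) :
    0 ≤ I.util i b :=
  Finset.sum_nonneg fun g _ => I.frUtil_nonneg i g (hb g)

lemma util_update (I : FairDivision n m) (i : Fin n) (b : Fin m → ℝ) (g : Fin m) (a : ℝ) :
    I.util i (Function.update b g a)
      = I.util i b - I.frUtil i g (b g) + I.frUtil i g a := by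
  unfold util
  have h : (fun g' => I.frUtil i g' (Function.update b g a g'))
      = Function.update (fun g' => I.frUtil i g' (b g')) g (I.frUtil i g a) := by
    funext g'
    by_cases hg : g' = g
    · subst hg; simp
    · simp [Function.update, hg]
  rw [show (∑ g', I.frUtil i g' (Function.update b g a g'))
      = ∑ g', (fun g' => I.frUtil i g' (Function.update b g a g')) g' from rfl, h,
    Finset.sum_update_of_mem (Finset.mem_univ g)]
  rw [← Finset.add_sum_erase _ _ (Finset.mem_univ g), Finset.sdiff_singleton_eq_erase]
  ring

end FairDivision
namespace FairDivision

lemma frUtil_le_mul (I : FairDivision n m) (i : Fin n) (g : Fin m) {t : ℝ} (ht : 0 ≤ t) :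
    I.frUtil i g t ≤ I.v i g * t := by
  unfold frUtil
  split_ifs with h1 h2
  · ring_nf; exact le_rfl
  · rw [h2]; simp
  · exact mul_nonneg (I.v_nonneg i g) ht

lemma util_ones (I : FairDivision n m) (i : Fin n) :
    I.util i (fun _ => 1) = ∑ g, I.v i g := by
  unfold util
  exact Finset.sum_congr rfl fun g _ => I.frUtil_one i g

/-- the set whose sup is the MMS -/
def MMSset (I : FairDivision n m) (i : Fin n) : Set ℝ :=
  { r : ℝ | ∃ P : Fin n → Fin m → ℝ, I.IsAllocation P ∧ r = ⨅ j, I.util i (P j) }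

lemma MMS_eq_sSup (I : FairDivision n m) (i : Fin n) : I.MMS i = sSup (I.MMSset i) := rfl

lemma MMSset_nonempty (hn : 0 < n) (I : FairDivision n m) (i : Fin n) :
    (I.MMSset i).Nonempty := by
  refine ⟨_, (fun j g => if j = ⟨0, hn⟩ then 1 else 0), ⟨?_, ?_⟩, rfl⟩
  · intro j g; by_cases h : j = ⟨0, hn⟩ <;> simp [h]
  · intro g; simp

lemma MMSset_elem_nonneg (hn : 0 < n) (I : FairDivision n m) (i : Fin n) {r : ℝ}
    (hr : r ∈ I.MMSset i) : 0 ≤ r := by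
  obtain ⟨P, hP, rfl⟩ := hr
  haveI : Nonempty (Fin n) := ⟨⟨0, hn⟩⟩
  exact le_ciInf fun k => I.util_nonneg i (fun g => (hP.1 k g).1)

lemma MMSset_elem_le (hn : 0 < n) (I : FairDivision n m) (i : Fin n) {r : ℝ}
    (hr : r ∈ I.MMSset i) : r ≤ ∑ g, I.v i g := by
  obtain ⟨P, hP, rfl⟩ := hr
  have hbb : BddBelow (Set.range fun j => I.util i (P j)) :=
    ⟨0, by rintro y ⟨k, rfl⟩; exact I.util_nonneg i (fun g => (hP.1 k g).1)⟩
  calc (⨅ j, I.util i (P j)) ≤ I.util i (P ⟨0, hn⟩) := ciInf_le hbb _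
    _ ≤ ∑ g, I.v i g :=
      Finset.sum_le_sum fun g _ => I.frUtil_le_v i g (hP.1 ⟨0, hn⟩ g).2

lemma MMSset_bddAbove (hn : 0 < n) (I : FairDivision n m) (i : Fin n) :
    BddAbove (I.MMSset i) :=
  ⟨∑ g, I.v i g, fun _ hr => MMSset_elem_le hn I i hr⟩

lemma MMS_nonneg (hn : 0 < n) (I : FairDivision n m) (i : Fin n) : 0 ≤ I.MMS i := by
  obtain ⟨r, hr⟩ := MMSset_nonempty hn I i
  exact le_trans (MMSset_elem_nonneg hn I i hr) (le_csSup (MMSset_bddAbove hn I i) hr)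

/-- at most one agent receives a full unit of a good -/
lemma alloc_unique_one (I : FairDivision n m) {P : Fin n → Fin m → ℝ}
    (hP : I.IsAllocation P) {k1 k2 : Fin n} {g : Fin m}
    (h1 : P k1 g = 1) (h2 : P k2 g = 1) : k1 = k2 := by
  by_contra hne
  have hk2 : k2 ∈ Finset.univ.erase k1 := Finset.mem_erase.2 ⟨Ne.symm hne, Finset.mem_univ _⟩
  have : P k1 g + P k2 g ≤ ∑ j, P j g := by
    rw [← Finset.add_sum_erase _ _ (Finset.mem_univ k1)]
    have := Finset.single_le_sum (f := fun j => P j g)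
      (fun j _ => (hP.1 j g).1) hk2
    linarith
  rw [hP.2 g, h1, h2] at this
  linarith

/-- The key budget inequality for the MMS. -/
lemma key_budget (hn : 0 < n) (I : FairDivision n m) (j : Fin n) (S : Finset (Fin m))
    (hS : ∀ g ∈ S, ¬ I.divisible j g) :
    ((n : ℝ) - S.card) * I.MMS j ≤ (∑ g, I.v j g) - ∑ g ∈ S, I.v j g := by
  have hRHS : (0:ℝ) ≤ (∑ g, I.v j g) - ∑ g ∈ S, I.v j g := by
    have : ∑ g ∈ S, I.v j g ≤ ∑ g, I.v j g :=
      Finset.sum_le_sum_of_subset_of_nonneg (Finset.subset_univ S)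
        (fun g _ _ => I.v_nonneg j g)
    linarith
  have helem : ∀ r ∈ I.MMSset j,
      ((n : ℝ) - S.card) * r ≤ (∑ g, I.v j g) - ∑ g ∈ S, I.v j g := by
    rintro r ⟨P, hP, rfl⟩
    have hbb : BddBelow (Set.range fun k => I.util j (P k)) :=
      ⟨0, by rintro y ⟨k, rfl⟩; exact I.util_nonneg j (fun g => (hP.1 k g).1)⟩
    have hrle : ∀ k, (⨅ k, I.util j (P k)) ≤ I.util j (P k) := fun k => ciInf_le hbb k
    haveI : Nonempty (Fin n) := ⟨⟨0, hn⟩⟩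
    have hr0 : 0 ≤ ⨅ k, I.util j (P k) :=
      le_ciInf fun k => I.util_nonneg j (fun g => (hP.1 k g).1)
    set r := ⨅ k, I.util j (P k)
    classical
    set T : Finset (Fin n) := Finset.univ.filter (fun k => ∃ g ∈ S, P k g = 1) with hT
    have hTS : T.card ≤ S.card := by
      set f : Fin m → Fin n := fun g => if h : ∃ k, P k g = 1 then h.choose else ⟨0, hn⟩ with hf
      refine Finset.card_le_card_of_surjOn f ?_
      intro k hk
      obtain ⟨g, hgS, hg1⟩ := (Finset.mem_filter.1 hk).2
      refine ⟨g, hgS, ?_⟩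
      have hex : ∃ k', P k' g = 1 := ⟨k, hg1⟩
      have : f g = hex.choose := by simp [hf, hex]
      rw [this]
      exact alloc_unique_one I hP hex.choose_spec hg1
    have hTn : T.card ≤ n := le_trans (Finset.card_le_univ T) (by simp)
    have hTc_card : ((n:ℝ) - S.card) ≤ (Tᶜ.card : ℝ) := by
      have h1 : Tᶜ.card = n - T.card := by rw [Finset.card_compl, Fintype.card_fin]
      rw [h1, Nat.cast_sub hTn]
      have : (T.card : ℝ) ≤ (S.card : ℝ) := Nat.cast_le.2 hTS
      linarith
    have hsum : (Tᶜ.card : ℝ) * r ≤ ∑ k ∈ Tᶜ, I.util j (P k) := by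
      have := Finset.card_nsmul_le_sum Tᶜ (fun k => I.util j (P k)) r (fun k _ => hrle k)
      rwa [nsmul_eq_mul] at this
    have hsum2 : ∑ k ∈ Tᶜ, I.util j (P k) ≤ (∑ g, I.v j g) - ∑ g ∈ S, I.v j g := by
      unfold util
      rw [Finset.sum_comm]
      have hper : ∀ g : Fin m, (∑ k ∈ Tᶜ, I.frUtil j g (P k g))
          ≤ I.v j g - (if g ∈ S then I.v j g else 0) := by
        intro g
        by_cases hgS : g ∈ S
        · have hzero : ∀ k ∈ Tᶜ, I.frUtil j g (P k g) = 0 := by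
            intro k hk
            have hk' : ¬ ∃ g' ∈ S, P k g' = 1 := by
              have := Finset.mem_compl.1 hk
              simpa [hT] using this
            have hne1 : P k g ≠ 1 := fun h => hk' ⟨g, hgS, h⟩
            unfold frUtil
            rw [if_neg (hS g hgS), if_neg hne1]
          rw [Finset.sum_eq_zero hzero, if_pos hgS]
          simp
        · rw [if_neg hgS]
          have h1 : (∑ k ∈ Tᶜ, I.frUtil j g (P k g)) ≤ ∑ k ∈ Tᶜ, I.v j g * P k g :=
            Finset.sum_le_sum fun k _ => I.frUtil_le_mul j g (hP.1 k g).1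
          have h2 : ∑ k ∈ Tᶜ, I.v j g * P k g = I.v j g * ∑ k ∈ Tᶜ, P k g := by
            rw [Finset.mul_sum]
          have h3 : ∑ k ∈ Tᶜ, P k g ≤ 1 := by
            rw [← hP.2 g]
            exact Finset.sum_le_sum_of_subset_of_nonneg (Finset.subset_univ _)
              (fun k _ _ => (hP.1 k g).1)
          calc (∑ k ∈ Tᶜ, I.frUtil j g (P k g)) ≤ I.v j g * ∑ k ∈ Tᶜ, P k g := by
                rw [← h2]; exact h1
            _ ≤ I.v j g * 1 := mul_le_mul_of_nonneg_left h3 (I.v_nonneg j g)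
            _ = I.v j g - 0 := by ring
      calc (∑ g, ∑ k ∈ Tᶜ, I.frUtil j g (P k g))
          ≤ ∑ g, (I.v j g - (if g ∈ S then I.v j g else 0)) :=
            Finset.sum_le_sum fun g _ => hper g
        _ = (∑ g, I.v j g) - ∑ g, (if g ∈ S then I.v j g else 0) := by
            rw [Finset.sum_sub_distrib]
        _ = (∑ g, I.v j g) - ∑ g ∈ S, I.v j g := by
            rw [Finset.sum_ite_mem, Finset.univ_inter]
    calc ((n : ℝ) - S.card) * r ≤ (Tᶜ.card : ℝ) * r :=
          mul_le_mul_of_nonneg_right hTc_card hr0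
      _ ≤ _ := le_trans hsum hsum2
  by_cases hcase : (n:ℝ) - S.card ≤ 0
  · exact le_trans (mul_nonpos_iff.2 (Or.inr ⟨hcase, MMS_nonneg hn I j⟩)) hRHS
  · push_neg at hcase
    have hsup : I.MMS j ≤ ((∑ g, I.v j g) - ∑ g ∈ S, I.v j g) / ((n:ℝ) - S.card) := by
      refine csSup_le (MMSset_nonempty hn I j) ?_
      intro r hr
      rw [le_div_iff₀ hcase]
      calc r * ((n:ℝ) - S.card) = ((n:ℝ) - S.card) * r := by ring
        _ ≤ _ := helem r hr
    calc ((n : ℝ) - S.card) * I.MMS j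
        ≤ ((n:ℝ) - S.card) * (((∑ g, I.v j g) - ∑ g ∈ S, I.v j g) / ((n:ℝ) - S.card)) :=
          mul_le_mul_of_nonneg_left hsup (le_of_lt hcase)
      _ = _ := by field_simp

end FairDivision
namespace FairDivision

lemma util_zero (I : FairDivision n m) (j : Fin n) : I.util j (fun _ => 0) = 0 := by
  unfold util; simp [frUtil_zero]

lemma util_single (I : FairDivision n m) (j : Fin n) (g₀ : Fin m) (t : ℝ) :
    I.util j (fun g => if g = g₀ then t else 0) = I.frUtil j g₀ t := by
  unfold util
  rw [Finset.sum_eq_single g₀]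
  · simp
  · intro g _ hne; simp only [if_neg hne, frUtil_zero]
  · intro h; exact absurd (Finset.mem_univ g₀) h

lemma rec_main (I : FairDivision n m) (r : Fin n → ℝ) (hr : ∀ j, 0 ≤ r j) :
    ∀ k : ℕ, ∀ A : Finset (Fin n), ∀ c : Fin m → ℝ, A.card = k → A.Nonempty →
    (∀ g, 0 ≤ c g ∧ c g ≤ 1) →
    (∀ j ∈ A, ∀ S : Finset (Fin m), (∀ g ∈ S, ¬ I.divisible j g ∧ c g = 1) →
      ((k : ℝ) - S.card) * r j ≤ I.util j c - ∑ g ∈ S, I.v j g) →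
    ∃ x : Fin n → Fin m → ℝ, (∀ i g, 0 ≤ x i g) ∧ (∀ i, i ∉ A → ∀ g, x i g = 0) ∧
      (∀ g, ∑ i ∈ A, x i g = c g) ∧ (∀ j ∈ A, r j / 2 ≤ I.util j (x j)) := by
  intro k
  induction k using Nat.strong_induction_on with
  | _ k IH =>
  intro A c hcard hne hc hINV
  match k, hcard with
  | 0, hcard => exact absurd hcard (Finset.card_pos.2 hne).ne'
  | Nat.succ k', hcard =>
  by_cases hk'0 : k' = 0
  · -- base case : a single agent takes everything
    subst hk'0
    obtain ⟨j₀, hA⟩ := Finset.card_eq_one.1 hcard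
    subst hA
    refine ⟨fun i g => if i = j₀ then c g else 0, ?_, ?_, ?_, ?_⟩
    · intro i g; by_cases h : i = j₀ <;> simp [h, (hc g).1]
    · intro i hi g; simp only [if_neg (by simpa using hi : i ≠ j₀)]
    · intro g; simp
    · intro j hj
      rw [Finset.mem_singleton] at hj
      subst hj
      have h0 := hINV j (Finset.mem_singleton_self j) ∅ (by simp)
      simp only [Finset.card_empty, Finset.sum_empty] at h0
      push_cast at h0
      have h2 : I.util j (fun g => if j = j then c g else 0) = I.util j c := by
        simp
      rw [h2]
      linarith [hr j]
  · -- inductive case, at least two agents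
    have hk'pos : 0 < k' := Nat.pos_of_ne_zero hk'0
    -- generic step: serve agent i₀ the bundle b₀ and recurse on c'
    have step : ∀ i₀ ∈ A, ∀ b₀ c' : Fin m → ℝ,
        (∀ g, 0 ≤ b₀ g) → (∀ g, 0 ≤ c' g ∧ c' g ≤ 1) → (∀ g, b₀ g + c' g = c g) →
        r i₀ / 2 ≤ I.util i₀ b₀ →
        (∀ j ∈ A.erase i₀, ∀ S : Finset (Fin m), (∀ g ∈ S, ¬ I.divisible j g ∧ c' g = 1) →
          ((k' : ℝ) - S.card) * r j ≤ I.util j c' - ∑ g ∈ S, I.v j g) →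
        ∃ x : Fin n → Fin m → ℝ, (∀ i g, 0 ≤ x i g) ∧ (∀ i, i ∉ A → ∀ g, x i g = 0) ∧
          (∀ g, ∑ i ∈ A, x i g = c g) ∧ (∀ j ∈ A, r j / 2 ≤ I.util j (x j)) := by
      intro i₀ hi₀ b₀ c' hb₀ hc' hadd hserve hINV'
      have hcard' : (A.erase i₀).card = k' := by
        rw [Finset.card_erase_of_mem hi₀, hcard]; omega
      have hne' : (A.erase i₀).Nonempty := Finset.card_pos.1 (hcard' ▸ hk'pos)
      obtain ⟨x', hx'0, hx'out, hx'sum, hx'util⟩ :=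
        IH k' (Nat.lt_succ_self k') (A.erase i₀) c' hcard' hne' hc' hINV'
      refine ⟨fun i => if i = i₀ then b₀ else x' i, ?_, ?_, ?_, ?_⟩
      · intro i g; dsimp only; by_cases h : i = i₀
        · rw [if_pos h]; exact hb₀ g
        · rw [if_neg h]; exact hx'0 i g
      · intro i hi g
        have hne2 : i ≠ i₀ := fun h => hi (h ▸ hi₀)
        dsimp only
        rw [if_neg hne2]
        exact hx'out i (fun h => hi (Finset.mem_of_mem_erase h)) g
      · intro g
        rw [← Finset.insert_erase hi₀, Finset.sum_insert (Finset.notMem_erase i₀ A)]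
        dsimp only
        rw [if_pos rfl]
        have heq : ∀ i ∈ A.erase i₀, (if i = i₀ then b₀ else x' i) g = x' i g := by
          intro i hi; rw [if_neg (Finset.ne_of_mem_erase hi)]
        rw [Finset.sum_congr rfl heq, hx'sum g, hadd g]
      · intro j hj
        dsimp only
        by_cases h : j = i₀
        · subst h; rw [if_pos rfl]; exact hserve
        · rw [if_neg h]
          exact hx'util j (Finset.mem_erase.2 ⟨h, hj⟩)
    by_cases hpos : ∀ i ∈ A, 0 < r i
    · -- all agents have positive requirement
      by_cases hclaim : ∃ i ∈ A, ∃ g : Fin m,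
          (I.divisible i g ∧ r i / 2 ≤ c g * I.v i g) ∨
          (¬ I.divisible i g ∧ c g = 1 ∧ r i / 2 ≤ I.v i g)
      · -- reduction phase
        obtain ⟨i₁, hi₁, g₀, hcl⟩ := hclaim
        by_cases hDg : (A.filter (fun i => I.divisible i g₀ ∧ r i / 2 ≤ c g₀ * I.v i g₀)).Nonempty
        · -- serve a divisible claimant needing the smallest fraction
          obtain ⟨i₀, hi₀Dg, hminp⟩ :=
            Finset.exists_min_image _ (fun i => r i / (2 * I.v i g₀)) hDg
          obtain ⟨hi₀A, hdiv₀, hclm₀⟩ := Finset.mem_filter.1 hi₀Dg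
          have hv₀ : 0 < I.v i₀ g₀ := by
            by_contra hv
            push_neg at hv
            have h1 : c g₀ * I.v i₀ g₀ ≤ 0 := mul_nonpos_iff.2 (Or.inl ⟨(hc g₀).1, hv⟩)
            linarith [hpos i₀ hi₀A]
          set t : ℝ := r i₀ / (2 * I.v i₀ g₀) with htdef
          have ht_pos : 0 < t := div_pos (hpos i₀ hi₀A) (by linarith)
          have hv₀' : I.v i₀ g₀ ≠ 0 := ne_of_gt hv₀
          have ht_mul : t * I.v i₀ g₀ = r i₀ / 2 := by
            rw [htdef]; field_simp
          have htc : t ≤ c g₀ := by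
            rw [htdef, div_le_iff₀ (by linarith : (0:ℝ) < 2 * I.v i₀ g₀)]
            nlinarith [hclm₀]
          refine step i₀ hi₀A (fun g => if g = g₀ then t else 0)
            (Function.update c g₀ (c g₀ - t)) ?_ ?_ ?_ ?_ ?_
          · intro g; split_ifs; exacts [le_of_lt ht_pos, le_rfl]
          · intro g
            by_cases hg : g = g₀
            · subst hg; rw [Function.update_self]
              exact ⟨by linarith, by linarith [(hc g).2]⟩
            · rw [Function.update_of_ne hg]; exact hc g
          · intro g
            by_cases hg : g = g₀
            · subst hg; rw [if_pos rfl, Function.update_self]; ring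
            · rw [if_neg hg, Function.update_of_ne hg]; ring
          · rw [util_single]
            unfold frUtil
            rw [if_pos hdiv₀, ht_mul]
          · intro j hj S hS
            have hjA : j ∈ A := Finset.mem_of_mem_erase hj
            have hg₀S : g₀ ∉ S := by
              intro hg
              have h2 := (hS g₀ hg).2
              rw [Function.update_self] at h2
              linarith [(hc g₀).2]
            have hSold : ∀ g ∈ S, ¬ I.divisible j g ∧ c g = 1 := by
              intro g hg
              have hne2 : g ≠ g₀ := fun h => hg₀S (h ▸ hg)
              have h2 := hS g hg
              rwa [Function.update_of_ne hne2] at h2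
            have hbase := hINV j hjA S hSold
            have hupd := I.util_update j c g₀ (c g₀ - t)
            by_cases hdj : I.divisible j g₀
            · have hloss : I.frUtil j g₀ (c g₀) - I.frUtil j g₀ (c g₀ - t) = t * I.v j g₀ := by
                unfold frUtil; rw [if_pos hdj, if_pos hdj]; ring
              have hbnd : t * I.v j g₀ ≤ r j / 2 := by
                by_cases hjcl : r j / 2 ≤ c g₀ * I.v j g₀
                · have hjDg : j ∈ A.filter (fun i => I.divisible i g₀ ∧ r i / 2 ≤ c g₀ * I.v i g₀) :=
                    Finset.mem_filter.2 ⟨hjA, hdj, hjcl⟩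
                  have hvj : 0 < I.v j g₀ := by
                    by_contra hv; push_neg at hv
                    have h1 : c g₀ * I.v j g₀ ≤ 0 := mul_nonpos_iff.2 (Or.inl ⟨(hc g₀).1, hv⟩)
                    linarith [hpos j hjA]
                  have hmin2 : t ≤ r j / (2 * I.v j g₀) := hminp j hjDg
                  calc t * I.v j g₀ ≤ (r j / (2 * I.v j g₀)) * I.v j g₀ :=
                        mul_le_mul_of_nonneg_right hmin2 (le_of_lt hvj)
                    _ = r j / 2 := by
                        have hvj' : I.v j g₀ ≠ 0 := ne_of_gt hvj
                        field_simp
                · push_neg at hjcl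
                  have h3 : t * I.v j g₀ ≤ c g₀ * I.v j g₀ :=
                    mul_le_mul_of_nonneg_right htc (I.v_nonneg j g₀)
                  linarith
              push_cast at hbase ⊢
              rw [hupd]
              linarith [hr j]
            · have hfr2 : I.frUtil j g₀ (c g₀ - t) = 0 := by
                unfold frUtil
                rw [if_neg hdj, if_neg (by intro h; linarith [(hc g₀).2] : ¬ c g₀ - t = 1)]
              by_cases hce : c g₀ = 1
              · have hfr1 : I.frUtil j g₀ (c g₀) = I.v j g₀ := by
                  rw [hce]; exact I.frUtil_one j g₀
                have hbase2 := hINV j hjA (insert g₀ S) (by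
                  intro g hg
                  rcases Finset.mem_insert.1 hg with h | h
                  · subst h; exact ⟨hdj, hce⟩
                  · exact hSold g h)
                rw [Finset.card_insert_of_notMem hg₀S, Finset.sum_insert hg₀S] at hbase2
                push_cast at hbase2 ⊢
                rw [hupd, hfr1, hfr2]
                linarith [hr j]
              · have hfr1 : I.frUtil j g₀ (c g₀) = 0 := by
                  unfold frUtil; rw [if_neg hdj, if_neg hce]
                push_cast at hbase ⊢
                rw [hupd, hfr1, hfr2]
                linarith [hr j]
        · -- no divisible claimant : an indivisible claimant takes the whole good
          rcases hcl with ⟨hd, hge⟩ | ⟨hnd, hce, hvge⟩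
          · exact absurd ⟨i₁, Finset.mem_filter.2 ⟨hi₁, hd, hge⟩⟩ hDg
          have hnoD : ∀ i ∈ A, I.divisible i g₀ → c g₀ * I.v i g₀ < r i / 2 := by
            intro i hi hdi
            by_contra hcon; push_neg at hcon
            exact hDg ⟨i, Finset.mem_filter.2 ⟨hi, hdi, hcon⟩⟩
          refine step i₁ hi₁ (fun g => if g = g₀ then (1:ℝ) else 0)
            (Function.update c g₀ 0) ?_ ?_ ?_ ?_ ?_
          · intro g; split_ifs; exacts [zero_le_one, le_rfl]
          · intro g; by_cases hg : g = g₀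
            · subst hg; rw [Function.update_self]; exact ⟨le_rfl, zero_le_one⟩
            · rw [Function.update_of_ne hg]; exact hc g
          · intro g
            by_cases hg : g = g₀
            · subst hg; rw [if_pos rfl, Function.update_self, hce]; ring
            · rw [if_neg hg, Function.update_of_ne hg]; ring
          · rw [util_single, I.frUtil_one]; exact hvge
          · intro j hj S hS
            have hjA : j ∈ A := Finset.mem_of_mem_erase hj
            have hg₀S : g₀ ∉ S := by
              intro hg
              have h2 := (hS g₀ hg).2
              rw [Function.update_self] at h2
              norm_num at h2
            have hSold : ∀ g ∈ S, ¬ I.divisible j g ∧ c g = 1 := by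
              intro g hg
              have hne2 : g ≠ g₀ := fun h => hg₀S (h ▸ hg)
              have h2 := hS g hg
              rwa [Function.update_of_ne hne2] at h2
            have hbase := hINV j hjA S hSold
            have hupd := I.util_update j c g₀ 0
            rw [frUtil_zero] at hupd
            have hfr1 : I.frUtil j g₀ (c g₀) = I.v j g₀ := by
              rw [hce]; exact I.frUtil_one j g₀
            by_cases hdj : I.divisible j g₀
            · have hbnd : I.v j g₀ < r j / 2 := by
                have h3 := hnoD j hjA hdj; rw [hce, one_mul] at h3; exact h3
              push_cast at hbase ⊢
              rw [hupd, hfr1]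
              linarith [hr j]
            · have hbase2 := hINV j hjA (insert g₀ S) (by
                intro g hg
                rcases Finset.mem_insert.1 hg with h | h
                · subst h; exact ⟨hdj, hce⟩
                · exact hSold g h)
              rw [Finset.card_insert_of_notMem hg₀S, Finset.sum_insert hg₀S] at hbase2
              push_cast at hbase2 ⊢
              rw [hupd, hfr1]
              linarith [hr j]
      · -- bag-filling phase
        push_neg at hclaim
        have hsmall : ∀ i ∈ A, ∀ g : Fin m, I.frUtil i g (c g) < r i / 2 := by
          intro i hi g
          have h2 := hclaim i hi g
          unfold frUtil
          by_cases hd : I.divisible i g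
          · rw [if_pos hd]
            exact h2.1 hd
          · rw [if_neg hd]
            by_cases hce : c g = 1
            · rw [if_pos hce]
              exact h2.2 hd hce
            · rw [if_neg hce]; exact half_pos (hpos i hi)
        set F : ℕ → Fin n → ℝ := fun t j =>
          ∑ g ∈ Finset.univ.filter (fun g : Fin m => (g : ℕ) < t), I.frUtil j g (c g)
          with hFdef
        obtain ⟨j₁, hj₁⟩ := hne
        have hQm : ∃ j ∈ A, r j / 2 ≤ F m j := by
          refine ⟨j₁, hj₁, ?_⟩
          have hfil : Finset.univ.filter (fun g : Fin m => (g : ℕ) < m) = Finset.univ := by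
            apply Finset.filter_true_of_mem; intro g _; exact g.isLt
          have hFm : F m j₁ = I.util j₁ c := by
            simp only [hFdef]; rw [hfil]; rfl
          have hbase := hINV j₁ hj₁ ∅ (by simp)
          simp only [Finset.card_empty, Finset.sum_empty] at hbase
          push_cast at hbase
          rw [hFm]
          have hrj := hr j₁
          nlinarith [hbase]
        have hQex : ∃ t : ℕ, ∃ j ∈ A, r j / 2 ≤ F t j := ⟨m, hQm⟩
        have ht₀spec := Nat.find_spec hQex
        have ht₀le : Nat.find hQex ≤ m := Nat.find_le hQm
        set t₀ := Nat.find hQex with ht₀def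
        have ht₀pos : 0 < t₀ := by
          rcases Nat.eq_zero_or_pos t₀ with h0 | h
          · exfalso
            obtain ⟨j, hjA, hjge⟩ := ht₀spec
            have hempty : Finset.univ.filter (fun g : Fin m => (g : ℕ) < t₀) = ∅ := by
              rw [h0]; simp
            have hF0 : F t₀ j = 0 := by
              simp only [hFdef]; rw [hempty]; exact Finset.sum_empty
            rw [hF0] at hjge
            linarith [hpos j hjA]
          · exact h
        set t₁ := t₀ - 1 with ht₁def
        have ht₁lt : t₁ < t₀ := by omega
        have hg₁lt : t₁ < m := by omega
        set g₁ : Fin m := ⟨t₁, hg₁lt⟩ with hg₁def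
        have hfilins : Finset.univ.filter (fun g : Fin m => (g : ℕ) < t₀)
            = insert g₁ (Finset.univ.filter (fun g : Fin m => (g : ℕ) < t₁)) := by
          ext g
          simp only [Finset.mem_insert, Finset.mem_filter, Finset.mem_univ, true_and]
          constructor
          · intro h
            by_cases hg : (g : ℕ) = t₁
            · left; exact Fin.ext (by simp [hg₁def, hg])
            · right; omega
          · rintro (rfl | h)
            · have hv1 : (g₁ : ℕ) = t₁ := rfl
              omega
            · omega
        have hg₁nm : g₁ ∉ Finset.univ.filter (fun g : Fin m => (g : ℕ) < t₁) := by
          simp [hg₁def]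
        have hstepF : ∀ j, F t₀ j = I.frUtil j g₁ (c g₁) + F t₁ j := by
          intro j
          simp only [hFdef]
          rw [hfilins, Finset.sum_insert hg₁nm]
        have hprev : ∀ j ∈ A, F t₁ j < r j / 2 := by
          intro j hjA
          have hmin3 := Nat.find_min hQex ht₁lt
          push_neg at hmin3
          exact hmin3 j hjA
        have hcap : ∀ j ∈ A, F t₀ j < r j := by
          intro j hj
          have h4 := hsmall j hj g₁
          have h5 := hprev j hj
          rw [hstepF j]
          linarith
        obtain ⟨j₀, hj₀A, hj₀ge⟩ := ht₀spec
        have hub : ∀ j, I.util j (fun g => if (g : ℕ) < t₀ then c g else 0) = F t₀ j := by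
          intro j
          unfold util
          simp only [hFdef]
          rw [← Finset.sum_filter_add_sum_filter_not Finset.univ
            (fun g : Fin m => (g : ℕ) < t₀) (fun g => I.frUtil j g (if (g : ℕ) < t₀ then c g else 0))]
          have h1 : ∑ g ∈ Finset.univ.filter (fun g : Fin m => (g : ℕ) < t₀),
              I.frUtil j g (if (g : ℕ) < t₀ then c g else 0)
              = ∑ g ∈ Finset.univ.filter (fun g : Fin m => (g : ℕ) < t₀), I.frUtil j g (c g) := by
            refine Finset.sum_congr rfl fun g hg => ?_
            rw [if_pos (Finset.mem_filter.1 hg).2]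
          have h2 : ∑ g ∈ Finset.univ.filter (fun g : Fin m => ¬ (g : ℕ) < t₀),
              I.frUtil j g (if (g : ℕ) < t₀ then c g else 0) = 0 := by
            refine Finset.sum_eq_zero fun g hg => ?_
            rw [if_neg (Finset.mem_filter.1 hg).2, frUtil_zero]
          rw [h1, h2, add_zero]
        have huc : ∀ j, I.util j (fun g => if (g : ℕ) < t₀ then 0 else c g)
            = I.util j c - F t₀ j := by
          intro j
          have hsplit : I.util j c = F t₀ j + ∑ g ∈ Finset.univ.filter
              (fun g : Fin m => ¬ (g : ℕ) < t₀), I.frUtil j g (c g) := by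
            unfold util
            simp only [hFdef]
            rw [← Finset.sum_filter_add_sum_filter_not Finset.univ
              (fun g : Fin m => (g : ℕ) < t₀) (fun g => I.frUtil j g (c g))]
          have h3 : I.util j (fun g => if (g : ℕ) < t₀ then 0 else c g)
              = ∑ g ∈ Finset.univ.filter (fun g : Fin m => ¬ (g : ℕ) < t₀), I.frUtil j g (c g) := by
            unfold util
            rw [← Finset.sum_filter_add_sum_filter_not Finset.univ
              (fun g : Fin m => (g : ℕ) < t₀)
              (fun g => I.frUtil j g (if (g : ℕ) < t₀ then 0 else c g))]
            have h4 : ∑ g ∈ Finset.univ.filter (fun g : Fin m => (g : ℕ) < t₀),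
                I.frUtil j g (if (g : ℕ) < t₀ then 0 else c g) = 0 := by
              refine Finset.sum_eq_zero fun g hg => ?_
              rw [if_pos (Finset.mem_filter.1 hg).2, frUtil_zero]
            have h5 : ∑ g ∈ Finset.univ.filter (fun g : Fin m => ¬ (g : ℕ) < t₀),
                I.frUtil j g (if (g : ℕ) < t₀ then 0 else c g)
                = ∑ g ∈ Finset.univ.filter (fun g : Fin m => ¬ (g : ℕ) < t₀),
                  I.frUtil j g (c g) := by
              refine Finset.sum_congr rfl fun g hg => ?_
              rw [if_neg (Finset.mem_filter.1 hg).2]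
            rw [h4, h5, zero_add]
          rw [h3]
          linarith [hsplit]
        refine step j₀ hj₀A (fun g => if (g : ℕ) < t₀ then c g else 0)
          (fun g => if (g : ℕ) < t₀ then 0 else c g) ?_ ?_ ?_ ?_ ?_
        · intro g; split_ifs
          · exact (hc g).1
          · exact le_rfl
        · intro g; split_ifs
          · exact ⟨le_rfl, zero_le_one⟩
          · exact hc g
        · intro g; split_ifs <;> ring
        · rw [hub j₀]; exact hj₀ge
        · intro j hj S hS
          have hjA : j ∈ A := Finset.mem_of_mem_erase hj
          have hSold : ∀ g ∈ S, ¬ I.divisible j g ∧ c g = 1 := by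
            intro g hg
            obtain ⟨h1, h2⟩ := hS g hg
            by_cases hlt : (g : ℕ) < t₀
            · rw [if_pos hlt] at h2; norm_num at h2
            · rw [if_neg hlt] at h2; exact ⟨h1, h2⟩
          have hbase := hINV j hjA S hSold
          rw [huc j]
          have h6 := hcap j hjA
          push_cast at hbase ⊢
          linarith [hr j]
    · -- some agent needs nothing : serve her the empty bundle
      push_neg at hpos
      obtain ⟨i₀, hi₀, hri₀⟩ := hpos
      have hri₀' : r i₀ = 0 := le_antisymm hri₀ (hr i₀)
      refine step i₀ hi₀ (fun _ => 0) c (fun g => le_rfl) hc (fun g => by ring) ?_ ?_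
      · rw [util_zero, hri₀']; norm_num
      · intro j hj S hS
        have hjA : j ∈ A := Finset.mem_of_mem_erase hj
        have := hINV j hjA S hS
        have hrj := hr j
        push_cast at this ⊢
        linarith
end FairDivision
/-- Every instance with `n` agents admits a (1/2)-MMS allocation. -/
theorem n_agent_half_mms (n m : ℕ) (hn : 0 < n) (I : FairDivision n m) :
    ∃ x, I.IsAllocation x ∧ ∀ i, 1 / 2 * I.MMS i ≤ I.util i (x i) := by
  haveI : Nonempty (Fin n) := ⟨⟨0, hn⟩⟩
  have hMMS0 : ∀ i, 0 ≤ I.MMS i := fun i => FairDivision.MMS_nonneg hn I i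
  obtain ⟨x, hx0, hxout, hxsum, hxutil⟩ :=
    FairDivision.rec_main I I.MMS hMMS0 n Finset.univ (fun _ => 1)
      (by simp)
      Finset.univ_nonempty
      (fun g => ⟨zero_le_one, le_rfl⟩)
      (by
        intro j _ S hS
        have hS' : ∀ g ∈ S, ¬ I.divisible j g := fun g hg => (hS g hg).1
        have hkb := FairDivision.key_budget hn I j S hS'
        rw [FairDivision.util_ones]
        exact hkb)
  refine ⟨x, ⟨fun i g => ⟨hx0 i g, ?_⟩, fun g => hxsum g⟩, fun i => ?_⟩
  · calc x i g ≤ ∑ i' ∈ Finset.univ, x i' g :=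
        Finset.single_le_sum (fun i' _ => hx0 i' g) (Finset.mem_univ i)
      _ = 1 := hxsum g
  · have := hxutil i (Finset.mem_univ i)
    linarith
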